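/- arXiv:math/0609161 — 3 statements merged into one kernel-verified Lean document; each statement's English description precedes it below -/
import Mathlib

section
/- Let α > 0 and L₀ := −∂_z² + (α²/4) z² − (5/2)α on L²(ℝ). Then for every bounded function g and every r > 0, ‖⟨z⟩^{−2} e^{α z²/4} e^{−r L₀} g‖_∞ ≤ 2(1/α + 1) e^{2αr} ‖⟨z⟩^{−2} e^{α z²/4} g‖_∞, where ⟨z⟩ := (1 + z²)^{1/2}. -/
/-!
Multiplying the Mehler kernel by the Gaussian `e^{-αy²/4}` turns it into `e^{2αr} e^{-αx²/4}` times
the Gaussian density of mean `x e^{-αr}` and variance `v = (1 - e^{-2αr})/α ≤ 1/α`. Since the kernel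
is positive, `|g| ≤ M ⟨y⟩² e^{-αy²/4}` gives
`|e^{-rL₀} g (x)| ≤ M e^{2αr} e^{-αx²/4} (1 + x² e^{-2αr} + v)`, the bracket being the mean of
`1 + y²` under that Gaussian, and `1 + x² + 1/α ≤ 2 (1/α + 1) ⟨x⟩²`.
-/

open MeasureTheory

/-- The integral kernel of `e^{-r L₀}` for
`L₀ = -∂_z² + (α²/4) z² - (5/2)α`: the Mehler kernel of the harmonic
oscillator times `e^{(5α/2) r}`. -/
noncomputable def heatKernelL0 (α r x y : ℝ) : ℝ :=
  Real.exp (5 * α / 2 * r) * Real.sqrt (α / (4 * Real.pi * Real.sinh (α * r))) *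
    Real.exp (-(α * ((x ^ 2 + y ^ 2) * Real.cosh (α * r) - 2 * x * y)) /
      (4 * Real.sinh (α * r)))

open Real ProbabilityTheory NNReal

theorem abs_integral_mul_le_of_abs_le {X : Type*} [MeasurableSpace X] {μ : Measure X}
    {k g w : X → ℝ} {M : ℝ} (hk : ∀ y, 0 ≤ k y) (hg : ∀ y, |g y| ≤ M * w y)
    (hkw : Integrable (fun y => k y * w y) μ) :
    |∫ y, k y * g y ∂μ| ≤ M * ∫ y, k y * w y ∂μ := by
  rw [← integral_const_mul]
  refine norm_integral_le_of_norm_le (G := ℝ) (hkw.const_mul M) (ae_of_all _ fun y => ?_)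
  calc ‖k y * g y‖ = k y * |g y| := by rw [Real.norm_eq_abs, abs_mul, abs_of_nonneg (hk y)]
    _ ≤ k y * (M * w y) := mul_le_mul_of_nonneg_left (hg y) (hk y)
    _ = M * (k y * w y) := by ring

theorem integral_sq_gaussianReal (m : ℝ) (v : ℝ≥0) :
    ∫ y, y ^ 2 ∂gaussianReal m v = m ^ 2 + v := by
  have h := variance_eq_sub (memLp_id_gaussianReal (μ := m) (v := v) 2)
  rw [variance_id_gaussianReal] at h
  simp only [Pi.pow_apply, id_eq, integral_id_gaussianReal] at h
  linarith

theorem integral_gaussianPDFReal_mul_one_add_sq (m : ℝ) {v : ℝ≥0} (hv : v ≠ 0) :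
    ∫ y, gaussianPDFReal m v y * (1 + y ^ 2) = 1 + m ^ 2 + v := by
  have hsq : Integrable (fun y : ℝ => y ^ 2) (gaussianReal m v) :=
    (memLp_id_gaussianReal 2).integrable_sq
  simp_rw [← smul_eq_mul, ← integral_gaussianReal_eq_integral_smul hv]
  rw [integral_add (integrable_const 1) hsq, integral_sq_gaussianReal]
  simp only [integral_const, probReal_univ, smul_eq_mul, mul_one]
  ring

theorem heatKernelL0_nonneg (α r x y : ℝ) : 0 ≤ heatKernelL0 α r x y := by
  unfold heatKernelL0; positivity

/-- The variance at time `r` of the Ornstein–Uhlenbeck process `dX = -α X dt + √2 dW`. -/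
noncomputable def ouVariance (α r : ℝ) : ℝ≥0 := ((1 - exp (-(2 * α * r))) / α).toNNReal

theorem coe_ouVariance {α r : ℝ} (hα : 0 < α) (hr : 0 ≤ r) :
    (ouVariance α r : ℝ) = (1 - exp (-(2 * α * r))) / α :=
  Real.coe_toNNReal _ (div_nonneg (by simp; positivity) hα.le)

theorem ouVariance_ne_zero {α r : ℝ} (hα : 0 < α) (hr : 0 < r) : ouVariance α r ≠ 0 := by
  have : exp (-(2 * α * r)) < 1 := exp_lt_one_iff.2 (neg_neg_of_pos (by positivity))
  simp only [ouVariance, ne_eq, Real.toNNReal_eq_zero, not_le]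
  exact div_pos (by linarith) hα

theorem ouVariance_le {α r : ℝ} (hα : 0 < α) : (ouVariance α r : ℝ) ≤ 1 / α := by
  rw [ouVariance, Real.coe_toNNReal']
  refine max_le (div_le_div_of_nonneg_right ?_ hα.le) (by positivity)
  linarith [exp_pos (-(2 * α * r))]

theorem heatKernelL0_mul_exp {α r : ℝ} (hα : 0 < α) (hr : 0 < r) (x y : ℝ) :
    heatKernelL0 α r x y * exp (-(α * y ^ 2 / 4)) =
      exp (2 * α * r) * exp (-(α * x ^ 2 / 4)) *
        gaussianPDFReal (x * exp (-(α * r))) (ouVariance α r) y := by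
  set E := exp (α * r) with hE
  have hE1 : 1 < E := one_lt_exp_iff.2 (by positivity)
  have hE0 : E ≠ 0 := by positivity
  have hE2 : E ^ 2 - 1 ≠ 0 := by nlinarith
  have hsinh : sinh (α * r) = (E ^ 2 - 1) / (2 * E) := by
    rw [sinh_eq, exp_neg, ← hE]; field_simp
  have hcosh : cosh (α * r) = (E ^ 2 + 1) / (2 * E) := by
    rw [cosh_eq, exp_neg, ← hE]; field_simp
  have hvar : (ouVariance α r : ℝ) = (E ^ 2 - 1) / (α * E ^ 2) := by
    rw [coe_ouVariance hα hr.le, exp_neg, show 2 * α * r = α * r + α * r by ring, exp_add, ← hE]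
    field_simp
  have hprefactor : exp (5 * α / 2 * r) * √(α / (4 * π * sinh (α * r))) =
      exp (2 * α * r) * (√(2 * π * ouVariance α r))⁻¹ := by
    rw [← Real.sqrt_inv, show 5 * α / 2 * r = 2 * α * r + α * r / 2 by ring, exp_add, exp_half,
      mul_assoc, ← Real.sqrt_mul (exp_pos _).le, hvar, hsinh]
    congr 2
    field_simp
    ring
  have hexponent : -(α * ((x ^ 2 + y ^ 2) * cosh (α * r) - 2 * x * y)) / (4 * sinh (α * r)) +
      -(α * y ^ 2 / 4) = -(α * x ^ 2 / 4) + -(y - x * exp (-(α * r))) ^ 2 / (2 * ouVariance α r) := by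
    rw [hvar, hcosh, hsinh, exp_neg, ← hE]
    field_simp
    ring
  rw [heatKernelL0, gaussianPDFReal, mul_assoc, ← exp_add, hexponent, hprefactor, exp_add]
  ring

noncomputable def gaussianWeight (α y : ℝ) : ℝ := (1 + y ^ 2) * exp (-(α * y ^ 2 / 4))

theorem heatKernelL0_mul_gaussianWeight {α r : ℝ} (hα : 0 < α) (hr : 0 < r) (x y : ℝ) :
    heatKernelL0 α r x y * gaussianWeight α y = exp (2 * α * r) * exp (-(α * x ^ 2 / 4)) *
      (gaussianPDFReal (x * exp (-(α * r))) (ouVariance α r) y * (1 + y ^ 2)) := by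
  rw [gaussianWeight, mul_left_comm, heatKernelL0_mul_exp hα hr]
  ring

theorem integral_heatKernelL0_mul_gaussianWeight {α r : ℝ} (hα : 0 < α) (hr : 0 < r) (x : ℝ) :
    ∫ y, heatKernelL0 α r x y * gaussianWeight α y = exp (2 * α * r) * exp (-(α * x ^ 2 / 4)) *
      (1 + (x * exp (-(α * r))) ^ 2 + ouVariance α r) := by
  simp_rw [heatKernelL0_mul_gaussianWeight hα hr, integral_const_mul,
    integral_gaussianPDFReal_mul_one_add_sq _ (ouVariance_ne_zero hα hr)]

theorem integrable_heatKernelL0_mul_gaussianWeight {α r : ℝ} (hα : 0 < α) (hr : 0 < r) (x : ℝ) :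
    Integrable fun y => heatKernelL0 α r x y * gaussianWeight α y :=
  Integrable.of_integral_ne_zero <| by
    rw [integral_heatKernelL0_mul_gaussianWeight hα hr x]; positivity

/-- the weighted `L^∞` bound
`‖⟨z⟩^{-2} e^{αz²/4} e^{-rL₀} g‖_∞ ≤ 2(1/α + 1) e^{2αr} ‖⟨z⟩^{-2} e^{αz²/4} g‖_∞`,
stated pointwise with `M` a bound for the weighted norm of `g` and
`⟨z⟩² = 1 + z²`. -/
theorem weighted_semigroup_bound (α r M : ℝ) (hα : 0 < α) (hr : 0 < r)
    (g : ℝ → ℝ)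
    (hg : ∀ z : ℝ, |g z| * Real.exp (α * z ^ 2 / 4) ≤ M * (1 + z ^ 2)) :
    ∀ x : ℝ, |∫ y : ℝ, heatKernelL0 α r x y * g y| * Real.exp (α * x ^ 2 / 4) ≤
      2 * (1 / α + 1) * Real.exp (2 * α * r) * M * (1 + x ^ 2) := by
  intro x
  have hM : 0 ≤ M := by simpa using (abs_nonneg (g 0)).trans (by simpa using hg 0)
  have hg_weight : ∀ y, |g y| ≤ M * gaussianWeight α y := fun y => by
    rw [gaussianWeight, exp_neg, ← mul_assoc, ← div_eq_mul_inv, le_div_iff₀ (exp_pos _)]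
    exact hg y
  have hKg := abs_integral_mul_le_of_abs_le (heatKernelL0_nonneg α r x) hg_weight
    (integrable_heatKernelL0_mul_gaussianWeight hα hr x)
  rw [integral_heatKernelL0_mul_gaussianWeight hα hr x] at hKg
  have hmean : (x * exp (-(α * r))) ^ 2 ≤ x ^ 2 := by
    rw [mul_pow]
    exact mul_le_of_le_one_right (sq_nonneg x)
      (pow_le_one₀ (exp_pos _).le (exp_le_one_iff.2 (neg_nonpos.2 (by positivity))))
  have hvar := ouVariance_le (r := r) hα
  calc |∫ y, heatKernelL0 α r x y * g y| * exp (α * x ^ 2 / 4)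
      ≤ M * (exp (2 * α * r) * exp (-(α * x ^ 2 / 4)) *
          (1 + (x * exp (-(α * r))) ^ 2 + ouVariance α r)) * exp (α * x ^ 2 / 4) := by
        gcongr
    _ = M * exp (2 * α * r) * (1 + (x * exp (-(α * r))) ^ 2 + ouVariance α r) := by
        rw [exp_neg]; field_simp
    _ ≤ M * exp (2 * α * r) * (2 * (1 / α + 1) * (1 + x ^ 2)) := by
        gcongr
        nlinarith [sq_nonneg x, show 0 < 1 / α by positivity]
    _ = 2 * (1 / α + 1) * exp (2 * α * r) * M * (1 + x ^ 2) := by ring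
end

section
/- Let α > 0, r > 0 and let U₀(x,y) := 4π (1 − e^{−2αr})^{−1/2} √α · e^{2αr} · e^{−α(x − e^{−αr}y)²/(2(1 − e^{−2αr}))}. Then for n ∈ {0,1,2,3,4}, sup_x e^{α x²/2} ∫ ⟨x⟩^{−n} U₀(x,y) e^{−α y²/2} ⟨y⟩^{n} dy ≤ C_n e^{2αr} for a constant C_n depending only on n and α. -/
open MeasureTheory Real

/-! With `ε = e^{-αr}` and `δ = 1 - ε²` the three Gaussian factors combine exactly into
`exp (-α (y - εx)² / (2δ))`. Peetre's inequality `⟨y⟩ ≤ √2 ⟨y - εx⟩ ⟨x⟩` bounds the weight ratio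
`⟨y⟩ⁿ / ⟨x⟩ⁿ` by `4 ⟨y - εx⟩⁴` for `n ≤ 4`. Half of the Gaussian absorbs this polynomial uniformly
in `δ ≤ 1`; the other half integrates to `√(4πδ/α)`, which cancels the normalisation `δ^{-1/2} √α`
of the kernel. -/

theorem one_add_sq_add_le (a b : ℝ) : 1 + (a + b) ^ 2 ≤ 2 * (1 + a ^ 2) * (1 + b ^ 2) := by
  nlinarith [sq_nonneg (a - b), sq_nonneg (a * b)]

theorem sqrt_rpow_neg_mul_sqrt_rpow_le {ε : ℝ} (hε : ε ^ 2 ≤ 1) {n : ℕ} (hn : n ≤ 4) (x y : ℝ) :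
    sqrt (1 + x ^ 2) ^ (-(n : ℝ)) * sqrt (1 + y ^ 2) ^ (n : ℝ) ≤
      4 * (1 + (y - ε * x) ^ 2) ^ 2 := by
  have hx : 0 < 1 + x ^ 2 := by positivity
  have hratio : (1 + y ^ 2) / (1 + x ^ 2) ≤ 2 * (1 + (y - ε * x) ^ 2) := by
    rw [div_le_iff₀ hx]
    calc 1 + y ^ 2 = 1 + ((y - ε * x) + ε * x) ^ 2 := by ring
      _ ≤ 2 * (1 + (y - ε * x) ^ 2) * (1 + (ε * x) ^ 2) := one_add_sq_add_le _ _
      _ ≤ 2 * (1 + (y - ε * x) ^ 2) * (1 + x ^ 2) := by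
        have : (ε * x) ^ 2 ≤ x ^ 2 := by nlinarith [sq_nonneg x]
        gcongr
  have hbase : 1 ≤ sqrt (2 * (1 + (y - ε * x) ^ 2)) := one_le_sqrt.mpr (by nlinarith)
  calc sqrt (1 + x ^ 2) ^ (-(n : ℝ)) * sqrt (1 + y ^ 2) ^ (n : ℝ)
      = sqrt ((1 + y ^ 2) / (1 + x ^ 2)) ^ n := by
        rw [rpow_neg (sqrt_nonneg _), rpow_natCast, rpow_natCast, sqrt_div' _ hx.le, div_pow,
          inv_mul_eq_div]
    _ ≤ sqrt (2 * (1 + (y - ε * x) ^ 2)) ^ n := by gcongr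
    _ ≤ sqrt (2 * (1 + (y - ε * x) ^ 2)) ^ 4 := pow_le_pow_right₀ hbase hn
    _ = 4 * (1 + (y - ε * x) ^ 2) ^ 2 := by
        rw [show 4 = 2 * 2 by rfl, pow_mul, sq_sqrt (by positivity)]
        ring

theorem one_add_sq_sq_mul_exp_neg_le {α : ℝ} (hα : 0 < α) (u : ℝ) :
    (1 + u ^ 2) ^ 2 * exp (-(α / 4 * u ^ 2)) ≤ 2 + 64 / α ^ 2 := by
  set s := α / 4 * u ^ 2
  have hs : 0 ≤ s := by positivity
  have hexp : exp (-s) ≤ 1 := exp_le_one_iff.mpr (by linarith)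
  have hsq : s ^ 2 * exp (-s) ≤ 2 := by
    have h := Real.pow_div_factorial_le_exp s hs 2
    rw [Nat.factorial_two, Nat.cast_two, div_le_iff₀ two_pos] at h
    calc s ^ 2 * exp (-s) ≤ exp s * 2 * exp (-s) := by gcongr
      _ = 2 := by rw [mul_right_comm, ← exp_add, add_neg_cancel, exp_zero, one_mul]
  have hu4 : 2 * (u ^ 4 * exp (-s)) ≤ 64 / α ^ 2 := by
    rw [le_div_iff₀ (by positivity)]
    calc 2 * (u ^ 4 * exp (-s)) * α ^ 2 = 32 * (s ^ 2 * exp (-s)) := by ring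
      _ ≤ 64 := by linarith
  calc (1 + u ^ 2) ^ 2 * exp (-s) ≤ 2 * exp (-s) + 2 * (u ^ 4 * exp (-s)) := by
        nlinarith [sq_nonneg (u ^ 2 - 1), exp_pos (-s)]
    _ ≤ 2 + 64 / α ^ 2 := by linarith

theorem mehler_exponent_eq {ε : ℝ} (hε : ε ^ 2 ≠ 1) (α x y : ℝ) :
    α * x ^ 2 / 2 + -α * (x - ε * y) ^ 2 / (2 * (1 - ε ^ 2)) + -α * y ^ 2 / 2 =
      -(α / (2 * (1 - ε ^ 2))) * (y - ε * x) ^ 2 := by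
  have : 1 - ε ^ 2 ≠ 0 := sub_ne_zero.mpr hε.symm
  field_simp
  ring

theorem weighted_mehler_integrand_le {α ε : ℝ} (hα : 0 < α) (hε : ε ^ 2 < 1) {n : ℕ}
    (hn : n ≤ 4) (x y : ℝ) :
    exp (α * x ^ 2 / 2) * (sqrt (1 + x ^ 2) ^ (-(n : ℝ)) *
        exp (-α * (x - ε * y) ^ 2 / (2 * (1 - ε ^ 2))) * exp (-α * y ^ 2 / 2) *
        sqrt (1 + y ^ 2) ^ (n : ℝ)) ≤
      4 * (2 + 64 / α ^ 2) * exp (-(α / (4 * (1 - ε ^ 2))) * (y - ε * x) ^ 2) := by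
  set δ := 1 - ε ^ 2
  set u := y - ε * x
  have hδ : 0 < δ := sub_pos.mpr hε
  have hδ1 : δ ≤ 1 := by nlinarith [sq_nonneg ε]
  have hhalf : exp (-(α / (4 * δ)) * u ^ 2) ≤ exp (-(α / 4 * u ^ 2)) := by
    rw [exp_le_exp, neg_mul, neg_le_neg_iff]
    gcongr
    linarith
  have hsplit : exp (-(α / (2 * δ)) * u ^ 2) =
      exp (-(α / (4 * δ)) * u ^ 2) * exp (-(α / (4 * δ)) * u ^ 2) := by
    rw [← exp_add]
    congr 1
    field_simp
    ring
  calc exp (α * x ^ 2 / 2) * (sqrt (1 + x ^ 2) ^ (-(n : ℝ)) *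
        exp (-α * (x - ε * y) ^ 2 / (2 * δ)) * exp (-α * y ^ 2 / 2) * sqrt (1 + y ^ 2) ^ (n : ℝ))
      = sqrt (1 + x ^ 2) ^ (-(n : ℝ)) * sqrt (1 + y ^ 2) ^ (n : ℝ) *
          exp (-(α / (2 * δ)) * u ^ 2) := by
        rw [← mehler_exponent_eq hε.ne α x y, exp_add, exp_add]
        ring
    _ ≤ 4 * (1 + u ^ 2) ^ 2 * (exp (-(α / 4 * u ^ 2)) * exp (-(α / (4 * δ)) * u ^ 2)) := by
        rw [hsplit]
        exact mul_le_mul (sqrt_rpow_neg_mul_sqrt_rpow_le hε.le hn x y)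
          (mul_le_mul_of_nonneg_right hhalf (exp_pos _).le) (by positivity) (by positivity)
    _ = 4 * ((1 + u ^ 2) ^ 2 * exp (-(α / 4 * u ^ 2))) * exp (-(α / (4 * δ)) * u ^ 2) := by
        ring
    _ ≤ 4 * (2 + 64 / α ^ 2) * exp (-(α / (4 * δ)) * u ^ 2) := by
        gcongr
        exact one_add_sq_sq_mul_exp_neg_le hα u

theorem rpow_neg_half_mul_sqrt_mul_integral_gaussian {α δ : ℝ} (hα : 0 < α) (hδ : 0 < δ)
    (c : ℝ) :
    δ ^ (-(1 : ℝ) / 2) * sqrt α * ∫ y, exp (-(α / (4 * δ)) * (y - c) ^ 2) = 2 * sqrt π := by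
  rw [integral_sub_right_eq_self (fun y => exp (-(α / (4 * δ)) * y ^ 2)) c, integral_gaussian,
    neg_div, rpow_neg hδ.le, ← sqrt_eq_rpow, ← sqrt_inv, ← sqrt_mul (by positivity),
    ← sqrt_mul (by positivity), show δ⁻¹ * α * (π / (α / (4 * δ))) = 2 ^ 2 * π by
      field_simp; ring,
    sqrt_mul (by positivity), sqrt_sq two_pos.le]

theorem weighted_mehler_integral_le {α ε : ℝ} (hα : 0 < α) (hε : ε ^ 2 < 1) {n : ℕ}
    (hn : n ≤ 4) {E : ℝ} (hE : 0 ≤ E) (x : ℝ) :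
    exp (α * x ^ 2 / 2) *
        (∫ y : ℝ, sqrt (1 + x ^ 2) ^ (-(n : ℝ)) *
          (4 * π * (1 - ε ^ 2) ^ (-(1 : ℝ) / 2) * sqrt α * E *
            exp (-α * (x - ε * y) ^ 2 / (2 * (1 - ε ^ 2)))) *
          exp (-α * y ^ 2 / 2) * sqrt (1 + y ^ 2) ^ (n : ℝ)) ≤
      32 * π * sqrt π * (2 + 64 / α ^ 2) * E := by
  set δ := 1 - ε ^ 2
  set M := 2 + 64 / α ^ 2
  have hδ : 0 < δ := sub_pos.mpr hε
  set K := 4 * π * δ ^ (-(1 : ℝ) / 2) * sqrt α * E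
  have hK : 0 ≤ K := by positivity
  have hbound : Integrable fun y => K * (4 * M * exp (-(α / (4 * δ)) * (y - ε * x) ^ 2)) :=
    (((integrable_exp_neg_mul_sq (by positivity)).comp_sub_right (ε * x)).const_mul _).const_mul _
  rw [← integral_const_mul]
  calc ∫ y, exp (α * x ^ 2 / 2) * (sqrt (1 + x ^ 2) ^ (-(n : ℝ)) *
          (K * exp (-α * (x - ε * y) ^ 2 / (2 * δ))) *
          exp (-α * y ^ 2 / 2) * sqrt (1 + y ^ 2) ^ (n : ℝ))
      ≤ ∫ y, K * (4 * M * exp (-(α / (4 * δ)) * (y - ε * x) ^ 2)) := by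
        refine integral_mono_of_nonneg (.of_forall fun y => by positivity) hbound
          (.of_forall fun y => ?_)
        calc _ = K * (exp (α * x ^ 2 / 2) * (sqrt (1 + x ^ 2) ^ (-(n : ℝ)) *
                exp (-α * (x - ε * y) ^ 2 / (2 * δ)) * exp (-α * y ^ 2 / 2) *
                sqrt (1 + y ^ 2) ^ (n : ℝ))) := by ring
          _ ≤ _ := mul_le_mul_of_nonneg_left (weighted_mehler_integrand_le hα hε hn x y) hK
    _ = 16 * π * M * E *
          (δ ^ (-(1 : ℝ) / 2) * sqrt α * ∫ y, exp (-(α / (4 * δ)) * (y - ε * x) ^ 2)) := by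
        rw [integral_const_mul, integral_const_mul]
        ring
    _ = 32 * π * sqrt π * M * E := by
        rw [rpow_neg_half_mul_sqrt_mul_integral_gaussian hα hδ]
        ring

/-- for the kernel
`U₀(x,y) = 4π (1-e^{-2αr})^{-1/2} √α e^{2αr} e^{-α(x - e^{-αr}y)²/(2(1-e^{-2αr}))}`
and `n ∈ {0,…,4}`,
`sup_x e^{αx²/2} ∫ ⟨x⟩^{-n} U₀(x,y) e^{-αy²/2} ⟨y⟩^n dy ≤ C_n e^{2αr}` with
`C_n` depending only on `n` and `α`. -/
theorem kernel_weighted_bound (α : ℝ) (hα : 0 < α) (n : ℕ) (hn : n ≤ 4) :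
    ∃ C > (0 : ℝ), ∀ r > (0 : ℝ), ∀ x : ℝ,
      Real.exp (α * x ^ 2 / 2) *
        (∫ y : ℝ, Real.sqrt (1 + x ^ 2) ^ (-(n : ℝ)) *
          (4 * Real.pi * (1 - Real.exp (-2 * α * r)) ^ (-(1 : ℝ) / 2) * Real.sqrt α *
            Real.exp (2 * α * r) *
            Real.exp (-α * (x - Real.exp (-α * r) * y) ^ 2 /
              (2 * (1 - Real.exp (-2 * α * r))))) *
          Real.exp (-α * y ^ 2 / 2) * Real.sqrt (1 + y ^ 2) ^ (n : ℝ)) ≤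
        C * Real.exp (2 * α * r) := by
  refine ⟨32 * π * sqrt π * (2 + 64 / α ^ 2), by positivity, fun r hr x => ?_⟩
  have hsq : exp (-2 * α * r) = exp (-α * r) ^ 2 := by
    rw [← exp_nat_mul]
    ring_nf
  have hε : exp (-α * r) ^ 2 < 1 :=
    pow_lt_one₀ (exp_pos _).le (exp_lt_one_iff.mpr (by nlinarith)) two_ne_zero
  rw [hsq]
  exact weighted_mehler_integral_le hα hε hn (exp_pos _).le x
end

section
/- Let c₁, c₂ > 0, b₀ > 0, p > 1, and β(τ) := (1/b₀ + (4p/(p−1)²)τ)^{−1}. Then there is a constant C = C(c₁, c₂, p) such that for all S > 0, ∫₀^S e^{−c₁(S−σ)} β(σ)^{c₂} dσ ≤ C β(S)^{c₂}. -/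
/-!
With `β(τ) = (A + aτ)⁻¹`, the ratio `β(σ) / β(S)` is at most `1 + (a/A)(S - σ)` for `σ ≤ S`,
so `β(σ)^{c₂}` is at most a polynomial in `S - σ` times `β(S)^{c₂}`. That polynomial is dominated
by `M e^{c₁(S - σ)/2}`, which leaves the integrand below `M β(S)^{c₂} e^{-c₁(S - σ)/2}`; the
remaining exponential integrates to at most `2 / c₁`, uniformly in `S`.
-/

open Real Set MeasureTheory

theorem integral_exp_neg_mul_sub_le {k : ℝ} (hk : 0 < k) (S : ℝ) :
    ∫ σ in (0 : ℝ)..S, exp (-k * (S - σ)) ≤ 1 / k := by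
  have hint : ∫ σ in (0 : ℝ)..S, exp (-k * (S - σ)) = (1 - exp (-k * S)) / k := by
    rw [intervalIntegral.integral_comp_sub_left (fun t => exp (-k * t)),
      intervalIntegral.integral_comp_mul_left (fun t => exp t) (neg_ne_zero.2 hk.ne'), integral_exp]
    simp only [sub_zero, sub_self, mul_zero, exp_zero, smul_eq_mul]
    field_simp
    ring
  rw [hint]
  gcongr
  linarith [exp_pos (-k * S)]

theorem one_add_le_inv_mul_exp_mul {δ : ℝ} (hδ : 0 < δ) (hδ₁ : δ ≤ 1) (x : ℝ) :
    1 + x ≤ δ⁻¹ * exp (δ * x) := by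
  rw [le_inv_mul_iff₀ hδ]
  nlinarith [add_one_le_exp (δ * x)]

theorem exists_one_add_mul_rpow_le_mul_exp {k c ε : ℝ} (hk : 0 ≤ k) (hc : 0 ≤ c) (hε : 0 < ε) :
    ∃ M > 0, ∀ x ≥ 0, (1 + k * x) ^ c ≤ M * exp (ε * x) := by
  set δ := min 1 (ε / (c * k + 1))
  have hδ : 0 < δ := lt_min one_pos (by positivity)
  have hcδk : c * δ * k ≤ ε := by
    have : δ * (c * k + 1) ≤ ε := (le_div_iff₀ (by positivity)).1 (min_le_right _ _)
    nlinarith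
  refine ⟨δ⁻¹ ^ c, by positivity, fun x hx => ?_⟩
  calc (1 + k * x) ^ c ≤ (δ⁻¹ * exp (δ * (k * x))) ^ c := by
        gcongr
        exact one_add_le_inv_mul_exp_mul hδ (min_le_left _ _) _
    _ = δ⁻¹ ^ c * exp (c * δ * k * x) := by
        rw [mul_rpow (by positivity) (exp_pos _).le, ← exp_mul]
        ring_nf
    _ ≤ δ⁻¹ ^ c * exp (ε * x) := by gcongr

theorem inv_add_mul_le_one_add_mul_inv_add_mul {A a σ S : ℝ} (hA : 0 < A) (ha : 0 ≤ a)
    (hσ : 0 ≤ σ) (hσS : σ ≤ S) :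
    (A + a * σ)⁻¹ ≤ (1 + a / A * (S - σ)) * (A + a * S)⁻¹ := by
  rw [← div_eq_mul_inv, inv_eq_one_div, div_le_div_iff₀ (by positivity) (by nlinarith)]
  have hexpand : (1 + a / A * (S - σ)) * (A + a * σ) = A + a * S + a / A * (S - σ) * (a * σ) := by
    field_simp
    ring
  have : 0 ≤ a / A * (S - σ) * (a * σ) := by
    have := sub_nonneg.2 hσS
    positivity
  linarith

theorem exists_integral_exp_mul_inv_add_mul_rpow_le {A a c₁ c₂ : ℝ} (hA : 0 < A) (ha : 0 ≤ a)
    (hc₁ : 0 < c₁) (hc₂ : 0 ≤ c₂) :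
    ∃ C > 0, ∀ S ≥ 0,
      ∫ σ in (0 : ℝ)..S, exp (-c₁ * (S - σ)) * (A + a * σ)⁻¹ ^ c₂ ≤ C * (A + a * S)⁻¹ ^ c₂ := by
  obtain ⟨M, hM, hpoly⟩ :=
    exists_one_add_mul_rpow_le_mul_exp (div_nonneg ha hA.le) hc₂ (half_pos hc₁)
  refine ⟨M * (2 / c₁), by positivity, fun S hS => ?_⟩
  set B := (A + a * S)⁻¹ ^ c₂
  have hpoint : ∀ σ ∈ Ioc 0 S, exp (-c₁ * (S - σ)) * (A + a * σ)⁻¹ ^ c₂ ≤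
      M * B * exp (-(c₁ / 2) * (S - σ)) := by
    rintro σ ⟨hσ, hσS⟩
    have hSσ := sub_nonneg.2 hσS
    calc exp (-c₁ * (S - σ)) * (A + a * σ)⁻¹ ^ c₂
        ≤ exp (-c₁ * (S - σ)) * ((1 + a / A * (S - σ)) ^ c₂ * B) := by
          rw [← mul_rpow (by positivity) (by positivity)]
          gcongr
          exact inv_add_mul_le_one_add_mul_inv_add_mul hA ha hσ.le hσS
      _ ≤ exp (-c₁ * (S - σ)) * (M * exp (c₁ / 2 * (S - σ)) * B) := by
          gcongr
          exact hpoly _ hSσ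
      _ = M * B * exp (-(c₁ / 2) * (S - σ)) := by
          rw [mul_comm M, mul_assoc, mul_assoc, ← mul_assoc (exp _), ← exp_add]
          ring_nf
  calc ∫ σ in (0 : ℝ)..S, exp (-c₁ * (S - σ)) * (A + a * σ)⁻¹ ^ c₂
      ≤ ∫ σ in (0 : ℝ)..S, M * B * exp (-(c₁ / 2) * (S - σ)) := by
        rw [intervalIntegral.integral_of_le hS, intervalIntegral.integral_of_le hS]
        refine setIntegral_mono_of_nonneg (fun σ hσ => by have := hσ.1; positivity) hpoint ?_
        exact (by fun_prop : Continuous _).integrableOn_Ioc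
    _ = M * B * ∫ σ in (0 : ℝ)..S, exp (-(c₁ / 2) * (S - σ)) :=
        intervalIntegral.integral_const_mul _ _
    _ ≤ M * B * (1 / (c₁ / 2)) := by
        gcongr
        exact integral_exp_neg_mul_sub_le (half_pos hc₁) S
    _ = M * (2 / c₁) * B := by ring

/-- the exponentially decaying convolution reproduces the slow
decay of `β^{c₂}`:
`∫₀^S e^{-c₁(S-σ)} β(σ)^{c₂} dσ ≤ C β(S)^{c₂}` with
`β(τ) = (1/b₀ + (4p/(p-1)²)τ)⁻¹`. -/
theorem convolution_beta_bound (p b₀ c₁ c₂ : ℝ) (hp : 1 < p) (hb₀ : 0 < b₀)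
    (hc₁ : 0 < c₁) (hc₂ : 0 < c₂) :
    ∃ C > (0 : ℝ), ∀ S > (0 : ℝ),
      (∫ σ in (0 : ℝ)..S,
          Real.exp (-c₁ * (S - σ)) * ((1 / b₀ + 4 * p / (p - 1) ^ 2 * σ)⁻¹) ^ c₂) ≤
        C * ((1 / b₀ + 4 * p / (p - 1) ^ 2 * S)⁻¹) ^ c₂ := by
  have ha : 0 ≤ 4 * p / (p - 1) ^ 2 := by
    have : 0 < p := by linarith
    positivity
  obtain ⟨C, hC, hbound⟩ :=
    exists_integral_exp_mul_inv_add_mul_rpow_le (one_div_pos.2 hb₀) ha hc₁ hc₂.le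
  exact ⟨C, hC, fun S hS => hbound S hS.le⟩
end
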